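/- arXiv:1601.00181 — 5 statements merged into one kernel-verified Lean document; each statement's English description precedes it below -/
import Mathlib

section
/- Let 2 ≤ k ≤ n and let A be an orthogonal array OA(k,n) of strength 2 and index 1, i.e. a family of n² rows, each a function from a k-element set of coordinates to an n-element symbol set, such that for every pair of distinct coordinates (a,b) the map sending a row r to the pair (r(a), r(b)) is a bijection onto the n² pairs of symbols. The block graph of A, whose vertices are the rows, two distinct rows adjacent if and only if they agree in at least one coordinate, is a strongly regular graph with parameters (n², k(n−1), (n−2)+(k−1)(k−2), k(k−1)). -/
/-!
Two distinct rows of an orthogonal array of strength 2 and index 1 agree in at most one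
coordinate, and every symbol occurs exactly `n` times in every column; so each row has
`k (n - 1)` neighbours. A common neighbour `t` of distinct rows `r, s` either agrees with both at
a coordinate where `r` and `s` agree (`n - 2` choices of `t` per such coordinate), or agrees with
`r` at `b` and with `s` at `c ≠ b`, where `r` and `s` differ at both `b` and `c`; each such pair
`(b, c)` determines exactly one `t`. If `r` and `s` agree in `m ≤ 1` coordinates, this gives
`m (n - 2) + (k - m) (k - m - 1)` common neighbours.
-/

open Finset

variable {R ι α : Type*}

def IsOrthogonalArray (A : R → ι → α) : Prop :=
  ∀ a b, a ≠ b → Function.Bijective fun r => (A r a, A r b)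

def blockGraph (A : R → ι → α) : SimpleGraph R where
  Adj r s := r ≠ s ∧ ∃ a, A r a = A s a
  symm := ⟨fun _ _ ⟨hrs, a, ha⟩ => ⟨hrs.symm, a, ha.symm⟩⟩
  loopless := ⟨fun _ h => h.1 rfl⟩

theorem blockGraph_adj {A : R → ι → α} {r s : R} :
    (blockGraph A).Adj r s ↔ r ≠ s ∧ ∃ a, A r a = A s a :=
  Iff.rfl

section Finite

variable [Fintype R] [DecidableEq R] [Fintype ι] [DecidableEq α] (A : R → ι → α) (r s : R)

def agreeCoords : Finset ι :=
  {c | A r c = A s c}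

def sharedCoordNeighbors : Finset R :=
  (agreeCoords A r s).biUnion fun a => ({t | A t a = A r a} : Finset R) \ {r, s}

def crossCoordNeighbors [DecidableEq ι] : Finset R :=
  (agreeCoords A r s)ᶜ.offDiag.biUnion fun p => {t | A t p.1 = A r p.1 ∧ A t p.2 = A s p.2}

theorem neighborFinset_blockGraph [DecidableRel (blockGraph A).Adj] :
    (blockGraph A).neighborFinset r =
      univ.biUnion fun a => ({s | A s a = A r a} : Finset R).erase r := by
  ext s
  simp [blockGraph_adj, eq_comm]

end Finite

namespace IsOrthogonalArray

variable {A : R → ι → α} (hA : IsOrthogonalArray A) {r s t : R} {a b : ι}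
include hA

theorem eq_of_agree (hab : a ≠ b) (ha : A r a = A s a) (hb : A r b = A s b) : r = s :=
  (hA a b hab).injective (Prod.ext ha hb)

theorem eq_of_agree_of_ne (hrs : r ≠ s) (ha : A r a = A s a) (hb : A r b = A s b) : a = b := by
  by_contra hab
  exact hrs (hA.eq_of_agree hab ha hb)

theorem card_eq_sq [Fintype R] [Fintype α] [Nontrivial ι] :
    Fintype.card R = Fintype.card α ^ 2 := by
  obtain ⟨a, b, hab⟩ := exists_pair_ne ι
  rw [Fintype.card_congr (Equiv.ofBijective _ (hA a b hab)), Fintype.card_prod, sq]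

variable [Fintype R] [DecidableEq α]

theorem card_filter_apply_eq_and_apply_eq (hab : a ≠ b) (x y : α) :
    #{t | A t a = x ∧ A t b = y} = 1 := by
  obtain ⟨t, ht⟩ := (hA a b hab).surjective (x, y)
  rw [card_eq_one]
  refine ⟨t, eq_singleton_iff_unique_mem.2 ⟨?_, fun u hu => ?_⟩⟩
  · simpa [Prod.ext_iff] using ht
  rw [mem_filter] at hu
  exact (hA a b hab).injective ((Prod.ext hu.2.1 hu.2.2).trans ht.symm)

theorem card_filter_apply_eq [Fintype α] [Nontrivial ι] (a : ι) (x : α) :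
    #{t | A t a = x} = Fintype.card α := by
  obtain ⟨b, hba⟩ := exists_ne a
  rw [card_eq_sum_card_fiberwise (f := fun t => A t b) (t := univ) (fun _ _ => mem_univ _)]
  simp only [filter_filter, hA.card_filter_apply_eq_and_apply_eq hba.symm, sum_const, card_univ,
    smul_eq_mul, mul_one]

variable [DecidableEq R] [Fintype ι]

theorem degree_blockGraph [Fintype α] [Nontrivial ι] [DecidableRel (blockGraph A).Adj] (r : R) :
    (blockGraph A).degree r = Fintype.card ι * (Fintype.card α - 1) := by
  rw [← SimpleGraph.card_neighborFinset_eq_degree, neighborFinset_blockGraph, card_biUnion]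
  · simp [card_erase_of_mem, hA.card_filter_apply_eq]
  · intro a _ b _ hab
    simp_rw [Function.onFun, disjoint_left, mem_erase, mem_filter]
    exact fun s ⟨hsr, _, hsa⟩ ⟨_, _, hsb⟩ => hab (hA.eq_of_agree_of_ne hsr hsa hsb)

theorem card_sharedCoordNeighbors [Fintype α] [Nontrivial ι] (hrs : r ≠ s) :
    #(sharedCoordNeighbors A r s) = #(agreeCoords A r s) * (Fintype.card α - 2) := by
  rw [sharedCoordNeighbors, card_biUnion]
  · rw [sum_congr rfl fun a ha => ?_, sum_const, smul_eq_mul]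
    have hrs_mem : {r, s} ⊆ ({t | A t a = A r a} : Finset R) := by
      simp only [agreeCoords, mem_filter_univ] at ha
      simp [insert_subset_iff, ha]
    rw [card_sdiff_of_subset hrs_mem, hA.card_filter_apply_eq, card_pair hrs]
  · intro a _ b _ hab
    simp_rw [Function.onFun, disjoint_left, mem_sdiff, mem_filter_univ, mem_insert, not_or]
    exact fun t ⟨hta, htr, _⟩ ⟨htb, _⟩ => hab (hA.eq_of_agree_of_ne htr hta htb)

variable [DecidableEq ι]

theorem card_crossCoordNeighbors :
    #(crossCoordNeighbors A r s) = #(agreeCoords A r s)ᶜ * (#(agreeCoords A r s)ᶜ - 1) := by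
  rw [crossCoordNeighbors, card_biUnion]
  · rw [sum_congr rfl fun p hp =>
        hA.card_filter_apply_eq_and_apply_eq (mem_offDiag.1 hp).2.2 _ _, sum_const, smul_eq_mul,
      mul_one, offDiag_card, Nat.mul_sub_one]
  · rintro ⟨b, c⟩ hp ⟨b', c'⟩ hp' hne
    simp only [mem_coe, mem_offDiag, agreeCoords, mem_compl, mem_filter_univ] at hp hp'
    simp_rw [Function.onFun, disjoint_left, mem_filter_univ]
    rintro t ⟨htb, htc⟩ ⟨htb', htc'⟩
    refine hne (Prod.ext ?_ ?_) <;> by_contra h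
    · obtain rfl := hA.eq_of_agree h htb htb'
      exact hp.2.1 htc
    · obtain rfl := hA.eq_of_agree h htc htc'
      exact hp'.1 htb'.symm

theorem disjoint_sharedCoordNeighbors_crossCoordNeighbors :
    Disjoint (sharedCoordNeighbors A r s) (crossCoordNeighbors A r s) := by
  simp only [disjoint_left, sharedCoordNeighbors, crossCoordNeighbors, agreeCoords, mem_biUnion,
    mem_sdiff, mem_filter_univ, mem_compl, mem_offDiag, mem_insert, not_or, Prod.exists]
  rintro t ⟨a, hrsa, hta, htr, -⟩ ⟨b, c, ⟨hrsb, -⟩, htb, -⟩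
  obtain rfl := hA.eq_of_agree_of_ne htr hta htb
  exact hrsb hrsa

theorem mem_commonNeighbors_blockGraph_iff [DecidableRel (blockGraph A).Adj] :
    t ∈ (blockGraph A).commonNeighbors r s ↔
      t ∈ sharedCoordNeighbors A r s ∪ crossCoordNeighbors A r s := by
  simp only [SimpleGraph.mem_commonNeighbors, blockGraph_adj, sharedCoordNeighbors,
    crossCoordNeighbors, agreeCoords, mem_union, mem_biUnion, mem_sdiff, mem_filter_univ,
    mem_insert, mem_singleton, not_or, mem_offDiag, mem_compl, Prod.exists]
  constructor
  · rintro ⟨⟨hrt, b, hb⟩, hst, c, hc⟩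
    by_cases hbc : b = c
    · subst hbc
      exact .inl ⟨b, hb.trans hc.symm, hb.symm, Ne.symm hrt, Ne.symm hst⟩
    · refine .inr ⟨b, c, ⟨fun hrsb => ?_, fun hrsc => ?_, hbc⟩, hb.symm, hc.symm⟩
      · exact hst (hA.eq_of_agree hbc (hrsb.symm.trans hb) hc)
      · exact hrt (hA.eq_of_agree hbc hb (hrsc.trans hc))
  · rintro (⟨a, hrsa, hta, htr, hts⟩ | ⟨b, c, ⟨hrsb, hrsc, -⟩, htb, htc⟩)
    · exact ⟨⟨Ne.symm htr, a, hta.symm⟩, Ne.symm hts, a, (hta.trans hrsa).symm⟩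
    · refine ⟨⟨?_, b, htb.symm⟩, ?_, c, htc.symm⟩ <;> rintro rfl
      · exact hrsc htc
      · exact hrsb htb.symm

theorem card_commonNeighbors_blockGraph [Fintype α] [Nontrivial ι]
    [DecidableRel (blockGraph A).Adj] (hrs : r ≠ s) :
    Fintype.card ((blockGraph A).commonNeighbors r s) =
      #(agreeCoords A r s) * (Fintype.card α - 2) +
        #(agreeCoords A r s)ᶜ * (#(agreeCoords A r s)ᶜ - 1) := by
  rw [Fintype.card_of_subtype _ fun _ => hA.mem_commonNeighbors_blockGraph_iff.symm,
    card_union_of_disjoint hA.disjoint_sharedCoordNeighbors_crossCoordNeighbors,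
    hA.card_sharedCoordNeighbors hrs, hA.card_crossCoordNeighbors]

theorem isSRGWith_blockGraph [Fintype α] [Nontrivial ι] [DecidableRel (blockGraph A).Adj] :
    (blockGraph A).IsSRGWith (Fintype.card α ^ 2) (Fintype.card ι * (Fintype.card α - 1))
      (Fintype.card α - 2 + (Fintype.card ι - 1) * (Fintype.card ι - 2))
      (Fintype.card ι * (Fintype.card ι - 1)) where
  card := hA.card_eq_sq
  regular := hA.degree_blockGraph
  of_adj r s := by
    rintro ⟨hrs, a, ha⟩
    have hagree : agreeCoords A r s = {a} :=
      eq_singleton_iff_unique_mem.2 ⟨(mem_filter_univ a).2 ha,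
        fun b hb => hA.eq_of_agree_of_ne hrs ((mem_filter_univ b).1 hb) ha⟩
    rw [hA.card_commonNeighbors_blockGraph hrs, hagree, card_compl, card_singleton, one_mul,
      Nat.sub_sub]
  of_not_adj r s hrs hnadj := by
    have hagree : agreeCoords A r s = ∅ :=
      filter_eq_empty_iff.2 fun a _ ha => hnadj ⟨hrs, a, ha⟩
    rw [hA.card_commonNeighbors_blockGraph hrs, hagree, compl_empty, card_empty, card_univ,
      zero_mul, zero_add]

end IsOrthogonalArray

open scoped Classical in
theorem orthogonal_array_block_graph_isSRG_general (n k : ℕ) (hk : 2 ≤ k)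
    (A : Fin (n ^ 2) → Fin k → Fin n)
    (hA : ∀ a b : Fin k, a ≠ b →
      Function.Bijective (fun r : Fin (n ^ 2) => (A r a, A r b)))
    (G : SimpleGraph (Fin (n ^ 2)))
    (hG : ∀ r s : Fin (n ^ 2), G.Adj r s ↔ r ≠ s ∧ ∃ a : Fin k, A r a = A s a) :
    G.IsSRGWith (n ^ 2) (k * (n - 1)) ((n - 2) + (k - 1) * (k - 2)) (k * (k - 1)) := by
  have : Nontrivial (Fin k) := Fin.nontrivial_iff_two_le.2 hk
  obtain rfl : G = blockGraph A := SimpleGraph.ext (funext₂ fun r s => propext (hG r s))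
  simpa only [Fintype.card_fin] using IsOrthogonalArray.isSRGWith_blockGraph hA

open scoped Classical in
/-- Block graph of an orthogonal array `OA(k,n)` of strength 2 and index 1: the rows are
indexed by `Fin (n^2)`, each row is a function `Fin k → Fin n`, and for every pair of
distinct coordinates the induced map to pairs of symbols is a bijection.  The graph whose
vertices are the rows, two distinct rows adjacent iff they agree in at least one coordinate,
is strongly regular with parameters `(n², k(n−1), (n−2)+(k−1)(k−2), k(k−1))`. -/
theorem orthogonal_array_block_graph_isSRG (n k : ℕ) (hk : 2 ≤ k) (hkn : k ≤ n)
    (A : Fin (n ^ 2) → Fin k → Fin n)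
    (hA : ∀ a b : Fin k, a ≠ b →
      Function.Bijective (fun r : Fin (n ^ 2) => (A r a, A r b)))
    (G : SimpleGraph (Fin (n ^ 2)))
    (hG : ∀ r s : Fin (n ^ 2), G.Adj r s ↔ r ≠ s ∧ ∃ a : Fin k, A r a = A s a) :
    G.IsSRGWith (n ^ 2) (k * (n - 1)) ((n - 2) + (k - 1) * (k - 2)) (k * (k - 1)) :=
  orthogonal_array_block_graph_isSRG_general n k hk A hA G hG
end

section
/- Let 2 ≤ k < v and let B be a Steiner system S(2,k,v), i.e. a family of k-element subsets (blocks) of a v-element point set such that every 2-element subset of points is contained in exactly one block. Then the number of blocks is v(v−1)/(k(k−1)), and the block graph of B, whose vertices are the blocks, two distinct blocks adjacent if and only if they intersect, is a strongly regular graph with parameters (v(v−1)/(k(k−1)), k(v−k)/(k−1), (k−1)² + (v−1)/(k−1) − 2, k²). -/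
namespace SteinerAux

open Finset

variable {v k : ℕ} {B : Finset (Finset (Fin v))}

lemma st_uniq (hpair : ∀ p q : Fin v, p ≠ q → ∃! b, b ∈ B ∧ p ∈ b ∧ q ∈ b)
    {b c : Finset (Fin v)} (hb : b ∈ B) (hc : c ∈ B) {p q : Fin v} (hpq : p ≠ q)
    (h1 : p ∈ b) (h2 : q ∈ b) (h3 : p ∈ c) (h4 : q ∈ c) : b = c :=
  (hpair p q hpq).unique ⟨hb, h1, h2⟩ ⟨hc, h3, h4⟩

lemma st_inter (hpair : ∀ p q : Fin v, p ≠ q → ∃! b, b ∈ B ∧ p ∈ b ∧ q ∈ b)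
    {b c : Finset (Fin v)} (hb : b ∈ B) (hc : c ∈ B) (hbc : b ≠ c)
    {w z : Fin v} (hw : w ∈ b ∩ c) (hz : z ∈ b ∩ c) : w = z := by
  by_contra hwz
  exact hbc (st_uniq hpair hb hc hwz (mem_inter.mp hw).1 (mem_inter.mp hz).1
    (mem_inter.mp hw).2 (mem_inter.mp hz).2)

/-- replication count: each point is in `(v-1)/(k-1)` blocks. -/
lemma st_r (hblock : ∀ b ∈ B, b.card = k)
    (hpair : ∀ p q : Fin v, p ≠ q → ∃! b, b ∈ B ∧ p ∈ b ∧ q ∈ b) (x : Fin v) :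
    (B.filter (fun b => x ∈ b)).card * (k - 1) = v - 1 := by
  classical
  have hdisj : ∀ b₁ ∈ B.filter (fun b => x ∈ b), ∀ b₂ ∈ B.filter (fun b => x ∈ b),
      b₁ ≠ b₂ → Disjoint (b₁.erase x) (b₂.erase x) := by
    intro b₁ h₁ b₂ h₂ hne
    simp only [mem_filter] at h₁ h₂
    rw [disjoint_left]
    intro y hy₁ hy₂
    exact hne (st_uniq hpair h₁.1 h₂.1 (mem_erase.mp hy₁).1
      (mem_erase.mp hy₁).2 h₁.2 (mem_erase.mp hy₂).2 h₂.2)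
  have hbiU : (B.filter (fun b => x ∈ b)).biUnion (fun b => b.erase x) = univ.erase x := by
    ext y
    simp only [mem_biUnion, mem_filter, mem_erase, mem_univ, and_true]
    constructor
    · rintro ⟨b, ⟨hbB, hxb⟩, hy, hyb⟩; exact hy
    · intro hy
      obtain ⟨b, ⟨hbB, hxb, hyb⟩, -⟩ := hpair x y (Ne.symm hy)
      exact ⟨b, ⟨hbB, hxb⟩, hy, hyb⟩
  have hcard := card_biUnion hdisj
  rw [hbiU, card_erase_of_mem (mem_univ x), card_univ, Fintype.card_fin] at hcard
  rw [hcard]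
  rw [sum_congr rfl (fun b hb => ?_), sum_const, smul_eq_mul]
  have hb' := mem_filter.mp hb
  rw [card_erase_of_mem hb'.2, hblock b hb'.1]

/-- fan: blocks through a point `y` outside a block `c` that meet `c` number exactly `k`. -/
lemma st_fan (hblock : ∀ b ∈ B, b.card = k)
    (hpair : ∀ p q : Fin v, p ≠ q → ∃! b, b ∈ B ∧ p ∈ b ∧ q ∈ b)
    {c : Finset (Fin v)} (hc : c ∈ B) {y : Fin v} (hy : y ∉ c) :
    (B.filter (fun d => y ∈ d ∧ (d ∩ c).Nonempty)).card = k := by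
  classical
  rw [← hblock c hc]
  refine card_bij (fun d hd => ((mem_filter.mp hd).2.2).choose) ?_ ?_ ?_
  · intro d hd
    exact (mem_inter.mp ((mem_filter.mp hd).2.2).choose_spec).2
  · intro d₁ hd₁ d₂ hd₂ heq
    beta_reduce at heq
    have hz₁ := ((mem_filter.mp hd₁).2.2).choose_spec
    have hz₂ := ((mem_filter.mp hd₂).2.2).choose_spec
    have hzy : ((mem_filter.mp hd₁).2.2).choose ≠ y := fun h => hy (h ▸ (mem_inter.mp hz₁).2)
    have hmem : ((mem_filter.mp hd₂).2.2).choose ∈ d₂ := (mem_inter.mp hz₂).1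
    rw [← heq] at hmem
    exact st_uniq hpair (mem_filter.mp hd₁).1 (mem_filter.mp hd₂).1 hzy
      (mem_inter.mp hz₁).1 (mem_filter.mp hd₁).2.1 hmem (mem_filter.mp hd₂).2.1
  · intro z hz
    have hyz : y ≠ z := fun h => hy (h ▸ hz)
    obtain ⟨d, ⟨hdB, hyd, hzd⟩, -⟩ := hpair y z hyz
    have hdne : (d ∩ c).Nonempty := ⟨z, mem_inter.mpr ⟨hzd, hz⟩⟩
    have hd : d ∈ B.filter (fun d => y ∈ d ∧ (d ∩ c).Nonempty) :=
      mem_filter.mpr ⟨hdB, hyd, hdne⟩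
    refine ⟨d, hd, ?_⟩
    have hdc : d ≠ c := fun h => hy (h ▸ hyd)
    exact st_inter hpair hdB hc hdc ((mem_filter.mp hd).2.2).choose_spec
      (mem_inter.mpr ⟨hzd, hz⟩)

/-- total count of blocks -/
lemma st_count (hblock : ∀ b ∈ B, b.card = k)
    (hpair : ∀ p q : Fin v, p ≠ q → ∃! b, b ∈ B ∧ p ∈ b ∧ q ∈ b) :
    B.card * (k * k - k) = v * v - v := by
  classical
  have hdisj : ∀ b₁ ∈ B, ∀ b₂ ∈ B, b₁ ≠ b₂ → Disjoint b₁.offDiag b₂.offDiag := by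
    intro b₁ h₁ b₂ h₂ hne
    rw [disjoint_left]
    intro p hp₁ hp₂
    rw [mem_offDiag] at hp₁ hp₂
    exact hne (st_uniq hpair h₁ h₂ hp₁.2.2 hp₁.1 hp₁.2.1 hp₂.1 hp₂.2.1)
  have hbiU : B.biUnion (fun b => b.offDiag) = (univ : Finset (Fin v)).offDiag := by
    ext p
    simp only [mem_biUnion, mem_offDiag, mem_univ, true_and]
    constructor
    · rintro ⟨b, hb, h1, h2, h3⟩; exact h3
    · intro hp
      obtain ⟨b, ⟨hbB, h1, h2⟩, -⟩ := hpair p.1 p.2 hp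
      exact ⟨b, hbB, h1, h2, hp⟩
  have hcard := card_biUnion hdisj
  rw [hbiU, offDiag_card, card_univ, Fintype.card_fin] at hcard
  rw [hcard]
  rw [sum_congr rfl (fun b hb => ?_), sum_const, smul_eq_mul]
  rw [offDiag_card, hblock b hb]

lemma st_deg (hk : 2 ≤ k) (hblock : ∀ b ∈ B, b.card = k)
    (hpair : ∀ p q : Fin v, p ≠ q → ∃! b, b ∈ B ∧ p ∈ b ∧ q ∈ b)
    {b : Finset (Fin v)} (hb : b ∈ B) :
    (B.filter (fun c => c ≠ b ∧ (b ∩ c).Nonempty)).card * (k - 1) = k * (v - k) := by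
  classical
  have hEq : B.filter (fun c => c ≠ b ∧ (b ∩ c).Nonempty)
      = b.biUnion (fun x => (B.filter (fun c => x ∈ c)).erase b) := by
    ext c
    simp only [mem_filter, mem_biUnion, mem_erase]
    constructor
    · rintro ⟨hcB, hcb, x, hx⟩
      exact ⟨x, (mem_inter.mp hx).1, hcb, hcB, (mem_inter.mp hx).2⟩
    · rintro ⟨x, hxb, hcb, hcB, hxc⟩
      exact ⟨hcB, hcb, ⟨x, mem_inter.mpr ⟨hxb, hxc⟩⟩⟩
  have hdisj : ∀ x₁ ∈ b, ∀ x₂ ∈ b, x₁ ≠ x₂ →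
      Disjoint ((B.filter (fun c => x₁ ∈ c)).erase b) ((B.filter (fun c => x₂ ∈ c)).erase b) := by
    intro x₁ h₁ x₂ h₂ hne
    rw [disjoint_left]
    intro c hc₁ hc₂
    exact (mem_erase.mp hc₁).1 (st_uniq hpair (mem_filter.mp (mem_of_mem_erase hc₁)).1 hb hne
      (mem_filter.mp (mem_of_mem_erase hc₁)).2 (mem_filter.mp (mem_of_mem_erase hc₂)).2 h₁ h₂)
  rw [hEq, card_biUnion hdisj, sum_mul]
  rw [sum_congr rfl (fun x hx => ?_), sum_const, smul_eq_mul, hblock b hb]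
  have hbmem : b ∈ B.filter (fun c => x ∈ c) := mem_filter.mpr ⟨hb, hx⟩
  rw [card_erase_of_mem hbmem, Nat.sub_mul, one_mul, st_r hblock hpair x]
  omega

lemma st_mu (hk : 2 ≤ k) (hblock : ∀ b ∈ B, b.card = k)
    (hpair : ∀ p q : Fin v, p ≠ q → ∃! b, b ∈ B ∧ p ∈ b ∧ q ∈ b)
    {b c : Finset (Fin v)} (hb : b ∈ B) (hc : c ∈ B) (hbc : b ∩ c = ∅) :
    (B.filter (fun d => d ≠ b ∧ d ≠ c ∧ (d ∩ b).Nonempty ∧ (d ∩ c).Nonempty)).card = k * k := by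
  classical
  have hEq : B.filter (fun d => d ≠ b ∧ d ≠ c ∧ (d ∩ b).Nonempty ∧ (d ∩ c).Nonempty)
      = b.biUnion (fun y => B.filter (fun d => y ∈ d ∧ (d ∩ c).Nonempty)) := by
    ext d
    simp only [mem_filter, mem_biUnion]
    constructor
    · rintro ⟨hdB, hdb, hdc, ⟨y, hy⟩, hnec⟩
      exact ⟨y, (mem_inter.mp hy).2, hdB, (mem_inter.mp hy).1, hnec⟩
    · rintro ⟨y, hyb, hdB, hyd, hnec⟩
      have hdb : d ≠ b := by
        intro h
        obtain ⟨z, hz⟩ := hnec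
        rw [h, hbc] at hz
        exact notMem_empty z hz
      have hdc : d ≠ c := fun h =>
        notMem_empty y (hbc ▸ mem_inter.mpr ⟨hyb, h ▸ hyd⟩)
      exact ⟨hdB, hdb, hdc, ⟨y, mem_inter.mpr ⟨hyd, hyb⟩⟩, hnec⟩
  have hdisj : ∀ y₁ ∈ b, ∀ y₂ ∈ b, y₁ ≠ y₂ →
      Disjoint (B.filter (fun d => y₁ ∈ d ∧ (d ∩ c).Nonempty))
        (B.filter (fun d => y₂ ∈ d ∧ (d ∩ c).Nonempty)) := by
    intro y₁ h₁ y₂ h₂ hne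
    rw [disjoint_left]
    intro d hd₁ hd₂
    have hdB := (mem_filter.mp hd₁).1
    have hdb : d ≠ b := by
      intro h
      obtain ⟨z, hz⟩ := (mem_filter.mp hd₁).2.2
      rw [h, hbc] at hz
      exact notMem_empty z hz
    exact hne (st_inter hpair hdB hb hdb
      (mem_inter.mpr ⟨(mem_filter.mp hd₁).2.1, h₁⟩) (mem_inter.mpr ⟨(mem_filter.mp hd₂).2.1, h₂⟩))
  rw [hEq, card_biUnion hdisj]
  rw [sum_congr rfl (fun y hy => ?_), sum_const, smul_eq_mul, hblock b hb]
  have hyc : y ∉ c := fun h => notMem_empty y (hbc ▸ mem_inter.mpr ⟨hy, h⟩)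
  exact st_fan hblock hpair hc hyc

lemma st_lambda (hk : 2 ≤ k) (hblock : ∀ b ∈ B, b.card = k)
    (hpair : ∀ p q : Fin v, p ≠ q → ∃! b, b ∈ B ∧ p ∈ b ∧ q ∈ b)
    {b c : Finset (Fin v)} (hb : b ∈ B) (hc : c ∈ B) (hbc : b ≠ c)
    {x : Fin v} (hx : x ∈ b ∩ c) :
    (B.filter (fun d => d ≠ b ∧ d ≠ c ∧ (d ∩ b).Nonempty ∧ (d ∩ c).Nonempty)).card
      = ((B.filter (fun e => x ∈ e)).card - 2) + (k - 1) * (k - 1) := by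
  classical
  have hxb : x ∈ b := (mem_inter.mp hx).1
  have hxc : x ∈ c := (mem_inter.mp hx).2
  set S : Finset (Finset (Fin v)) := ((B.filter (fun e => x ∈ e)).erase b).erase c with hS
  set T : Finset (Finset (Fin v)) :=
    (b.erase x).biUnion (fun y => (B.filter (fun d => y ∈ d ∧ (d ∩ c).Nonempty)).erase b) with hT
  -- members of T do not contain x
  have hTx : ∀ d ∈ T, x ∉ d := by
    intro d hd hxd
    rw [hT] at hd
    obtain ⟨y, hy, hd'⟩ := mem_biUnion.mp hd
    have hdB := (mem_filter.mp (mem_of_mem_erase hd')).1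
    have hdb := (mem_erase.mp hd').1
    have hyd := (mem_filter.mp (mem_of_mem_erase hd')).2.1
    exact (mem_erase.mp hy).1 (st_inter hpair hdB hb hdb
      (mem_inter.mpr ⟨hyd, (mem_erase.mp hy).2⟩) (mem_inter.mpr ⟨hxd, hxb⟩))
  have hEq : B.filter (fun d => d ≠ b ∧ d ≠ c ∧ (d ∩ b).Nonempty ∧ (d ∩ c).Nonempty)
      = S ∪ T := by
    ext d
    simp only [hS, hT, mem_union, mem_filter, mem_erase, mem_biUnion]
    constructor
    · rintro ⟨hdB, hdb, hdc, ⟨y, hy⟩, hnec⟩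
      by_cases hxd : x ∈ d
      · exact Or.inl ⟨hdc, hdb, hdB, hxd⟩
      · refine Or.inr ⟨y, ⟨?_, (mem_inter.mp hy).2⟩, hdb, hdB, (mem_inter.mp hy).1, hnec⟩
        exact fun h => hxd (h ▸ (mem_inter.mp hy).1)
    · rintro (⟨hdc, hdb, hdB, hxd⟩ | ⟨y, ⟨hyx, hyb⟩, hdb, hdB, hyd, hnec⟩)
      · exact ⟨hdB, hdb, hdc, ⟨x, mem_inter.mpr ⟨hxd, hxb⟩⟩, ⟨x, mem_inter.mpr ⟨hxd, hxc⟩⟩⟩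
      · have hdc : d ≠ c := by
          intro h
          exact hyx (st_inter hpair hb hc hbc (mem_inter.mpr ⟨hyb, h ▸ hyd⟩) hx)
        exact ⟨hdB, hdb, hdc, ⟨y, mem_inter.mpr ⟨hyd, hyb⟩⟩, hnec⟩
  have hST : Disjoint S T := by
    rw [disjoint_left]
    intro d hdS hdT
    rw [hS] at hdS
    exact hTx d hdT (mem_filter.mp (mem_of_mem_erase (mem_of_mem_erase hdS))).2
  have hTdisj : ∀ y₁ ∈ b.erase x, ∀ y₂ ∈ b.erase x, y₁ ≠ y₂ →
      Disjoint ((B.filter (fun d => y₁ ∈ d ∧ (d ∩ c).Nonempty)).erase b)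
        ((B.filter (fun d => y₂ ∈ d ∧ (d ∩ c).Nonempty)).erase b) := by
    intro y₁ h₁ y₂ h₂ hne
    rw [disjoint_left]
    intro d hd₁ hd₂
    exact hne (st_inter hpair (mem_filter.mp (mem_of_mem_erase hd₁)).1 hb (mem_erase.mp hd₁).1
      (mem_inter.mpr ⟨(mem_filter.mp (mem_of_mem_erase hd₁)).2.1, (mem_erase.mp h₁).2⟩)
      (mem_inter.mpr ⟨(mem_filter.mp (mem_of_mem_erase hd₂)).2.1, (mem_erase.mp h₂).2⟩))
  have hTcard : T.card = (k - 1) * (k - 1) := by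
    rw [hT, card_biUnion hTdisj]
    rw [sum_congr rfl (fun y hy => ?_), sum_const, smul_eq_mul,
      card_erase_of_mem hxb, hblock b hb]
    have hyc : y ∉ c := fun h =>
      (mem_erase.mp hy).1 (st_inter hpair hb hc hbc
        (mem_inter.mpr ⟨(mem_erase.mp hy).2, h⟩) hx)
    have hbmem : b ∈ B.filter (fun d => y ∈ d ∧ (d ∩ c).Nonempty) :=
      mem_filter.mpr ⟨hb, (mem_erase.mp hy).2, ⟨x, hx⟩⟩
    rw [card_erase_of_mem hbmem, st_fan hblock hpair hc hyc]
  have hScard : S.card = (B.filter (fun e => x ∈ e)).card - 2 := by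
    have hcmem : c ∈ (B.filter (fun e => x ∈ e)).erase b :=
      mem_erase.mpr ⟨hbc.symm, mem_filter.mpr ⟨hc, hxc⟩⟩
    rw [hS, card_erase_of_mem hcmem, card_erase_of_mem (mem_filter.mpr ⟨hb, hxb⟩)]
    omega
  rw [hEq, card_union_of_disjoint hST, hScard, hTcard]

end SteinerAux

open scoped Classical in
/-- Block graph of a Steiner system `S(2,k,v)`: `B` is a family of `k`-element subsets
(blocks) of a `v`-element point set such that every pair of distinct points lies in exactly
one block.  Then the number of blocks is `v(v−1)/(k(k−1))`, and the graph whose vertices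
are the blocks, two distinct blocks adjacent iff they intersect, is strongly regular with
parameters `(v(v−1)/(k(k−1)), k(v−k)/(k−1), (k−1)² + (v−1)/(k−1) − 2, k²)`. -/
theorem steiner_block_graph_isSRG (v k : ℕ) (hk : 2 ≤ k) (hkv : k < v)
    (B : Finset (Finset (Fin v)))
    (hblock : ∀ b ∈ B, b.card = k)
    (hpair : ∀ p q : Fin v, p ≠ q → ∃! b, b ∈ B ∧ p ∈ b ∧ q ∈ b)
    (G : SimpleGraph {b : Finset (Fin v) // b ∈ B})
    (hG : ∀ b c : {b : Finset (Fin v) // b ∈ B},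
      G.Adj b c ↔ b ≠ c ∧ (b.1 ∩ c.1).Nonempty) :
    B.card = v * (v - 1) / (k * (k - 1)) ∧
    G.IsSRGWith (v * (v - 1) / (k * (k - 1))) (k * (v - k) / (k - 1))
      ((k - 1) ^ 2 + (v - 1) / (k - 1) - 2) (k ^ 2) := by
  classical
  have hk1 : 0 < k - 1 := by omega
  have hkk : 0 < k * (k - 1) := Nat.mul_pos (by omega) hk1
  have hBcard : B.card = v * (v - 1) / (k * (k - 1)) := by
    refine (Nat.div_eq_of_eq_mul_left hkk ?_).symm
    have h1 : k * (k - 1) = k * k - k := by rw [Nat.mul_sub, mul_one]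
    have h2 : v * (v - 1) = v * v - v := by rw [Nat.mul_sub, mul_one]
    rw [h1, h2, ← SteinerAux.st_count hblock hpair]
  have hr : ∀ x : Fin v, (B.filter (fun b => x ∈ b)).card = (v - 1) / (k - 1) := fun x =>
    (Nat.div_eq_of_eq_mul_left hk1 (SteinerAux.st_r hblock hpair x).symm).symm
  have key : ∀ b c : {x : Finset (Fin v) // x ∈ B}, Fintype.card ↥(G.commonNeighbors b c)
      = (B.filter (fun d => d ≠ b.1 ∧ d ≠ c.1 ∧ (d ∩ b.1).Nonempty ∧ (d ∩ c.1).Nonempty)).card := by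
    intro b c
    rw [← Set.toFinset_card]
    refine Finset.card_bij (fun d _ => d.1) ?_ ?_ ?_
    · intro d hd
      rw [Set.mem_toFinset, SimpleGraph.mem_commonNeighbors] at hd
      obtain ⟨h1, h2⟩ := hd
      rw [hG b d] at h1
      rw [hG c d] at h2
      refine Finset.mem_filter.mpr ⟨d.2, ?_, ?_, ?_, ?_⟩
      · exact fun h => h1.1 (Subtype.ext h.symm)
      · exact fun h => h2.1 (Subtype.ext h.symm)
      · obtain ⟨z, hz⟩ := h1.2
        exact ⟨z, Finset.mem_inter.mpr ⟨(Finset.mem_inter.mp hz).2, (Finset.mem_inter.mp hz).1⟩⟩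
      · obtain ⟨z, hz⟩ := h2.2
        exact ⟨z, Finset.mem_inter.mpr ⟨(Finset.mem_inter.mp hz).2, (Finset.mem_inter.mp hz).1⟩⟩
    · intro d₁ h₁ d₂ h₂ h
      exact Subtype.ext h
    · intro e he
      obtain ⟨heB, he1, he2, he3, he4⟩ := Finset.mem_filter.mp he
      refine ⟨⟨e, heB⟩, ?_, rfl⟩
      rw [Set.mem_toFinset, SimpleGraph.mem_commonNeighbors]
      constructor
      · rw [hG]
        refine ⟨fun h => he1 (congrArg Subtype.val h).symm, ?_⟩
        obtain ⟨z, hz⟩ := he3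
        exact ⟨z, Finset.mem_inter.mpr ⟨(Finset.mem_inter.mp hz).2, (Finset.mem_inter.mp hz).1⟩⟩
      · rw [hG]
        refine ⟨fun h => he2 (congrArg Subtype.val h).symm, ?_⟩
        obtain ⟨z, hz⟩ := he4
        exact ⟨z, Finset.mem_inter.mpr ⟨(Finset.mem_inter.mp hz).2, (Finset.mem_inter.mp hz).1⟩⟩
  refine ⟨hBcard, ?_, ?_, ?_, ?_⟩
  · exact (Fintype.card_coe B).trans hBcard
  · -- regularity
    intro b
    have hbridge : G.degree b
        = (B.filter (fun d => d ≠ b.1 ∧ (b.1 ∩ d).Nonempty)).card := by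
      rw [← SimpleGraph.card_neighborSet_eq_degree, ← Set.toFinset_card]
      refine Finset.card_bij (fun d _ => d.1) ?_ ?_ ?_
      · intro d hd
        rw [Set.mem_toFinset, SimpleGraph.mem_neighborSet, hG b d] at hd
        exact Finset.mem_filter.mpr ⟨d.2, fun h => hd.1 (Subtype.ext h.symm), hd.2⟩
      · intro d₁ h₁ d₂ h₂ h
        exact Subtype.ext h
      · intro e he
        obtain ⟨heB, he1, he2⟩ := Finset.mem_filter.mp he
        refine ⟨⟨e, heB⟩, ?_, rfl⟩
        rw [Set.mem_toFinset, SimpleGraph.mem_neighborSet, hG]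
        exact ⟨fun h => he1 (congrArg Subtype.val h).symm, he2⟩
    rw [hbridge]
    refine (Nat.div_eq_of_eq_mul_left hk1 ?_).symm
    exact (SteinerAux.st_deg hk hblock hpair b.2).symm
  · -- lambda
    intro b c hadj
    rw [key b c]
    rw [hG b c] at hadj
    obtain ⟨hne, hnon⟩ := hadj
    have hbc1 : b.1 ≠ c.1 := fun h => hne (Subtype.ext h)
    have hx := hnon.choose_spec
    rw [SteinerAux.st_lambda hk hblock hpair b.2 c.2 hbc1 hx, hr hnon.choose]
    have h2le : 2 ≤ (v - 1) / (k - 1) := by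
      rw [← hr hnon.choose]
      have hsub : ({b.1, c.1} : Finset (Finset (Fin v)))
          ⊆ B.filter (fun e => hnon.choose ∈ e) := by
        intro y hy
        rcases Finset.mem_insert.mp hy with h | h
        · subst h
          exact Finset.mem_filter.mpr ⟨b.2, (Finset.mem_inter.mp hx).1⟩
        · rw [Finset.mem_singleton.mp h]
          exact Finset.mem_filter.mpr ⟨c.2, (Finset.mem_inter.mp hx).2⟩
      calc 2 = ({b.1, c.1} : Finset (Finset (Fin v))).card := (Finset.card_pair hbc1).symm
        _ ≤ _ := Finset.card_le_card hsub
    rw [pow_two]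
    generalize hA : (k - 1) * (k - 1) = A
    generalize hR : (v - 1) / (k - 1) = R at h2le ⊢
    omega
  · -- mu
    intro b c hbc hnadj
    rw [key b c]
    have hempty : b.1 ∩ c.1 = ∅ := by
      rw [← Finset.not_nonempty_iff_eq_empty]
      exact fun h => hnadj ((hG b c).mpr ⟨hbc, h⟩)
    rw [SteinerAux.st_mu hk hblock hpair b.2 c.2 hempty, pow_two]
end

section
/- Let M be a regular symmetric Hadamard matrix with constant diagonal of order n, with diagonal value δ. Define a simple graph G on the n row indices by making two distinct indices i and j adjacent if and only if M i j ≠ δ (i.e., replace all entries of M equal to the diagonal value by 0 and the remaining entries by 1, and take the result as an adjacency matrix). Then G is a strongly regular graph: there exist parameters k, λ, μ such that G is strongly regular with parameters (n,k,λ,μ). -/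
/-!
With `J` the all-ones matrix, the adjacency matrix of the graph is `A = (J - δ M) / 2`, since
`M` has the constant diagonal `δ = ±1` and `±1` entries. Symmetry, `M Mᵀ = n I` and the constant
row sums give `M² = n I` and `M J = J M = δ ε √n J`, so `A² = ((n - 2 ε √n) / 4) J + (n / 4) I`.
Reading off the entries of `A²`, every degree is `n / 2 - ε √n / 2` and any two distinct vertices
have `n / 4 - ε √n / 2` common neighbours, whether adjacent or not.
-/

/-- `M` is a regular symmetric Hadamard matrix with constant diagonal (RSHCD) with diagonal
value `δ ∈ {−1,1}` and sign `ε ∈ {−1,1}`: a symmetric `±1`-matrix with `M Mᵀ = n I`,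
constant diagonal `δ`, and all row sums equal to `δ ε √n`. -/
def IsRSHCD {m : Type*} [Fintype m] [DecidableEq m]
    (M : Matrix m m ℝ) (δ ε : ℝ) : Prop :=
  M.IsSymm ∧ (∀ i j, M i j = 1 ∨ M i j = -1) ∧
    M * M.transpose = (Fintype.card m : ℝ) • (1 : Matrix m m ℝ) ∧
    (δ = 1 ∨ δ = -1) ∧ (∀ i, M i i = δ) ∧
    (ε = 1 ∨ ε = -1) ∧
    ∀ i, ∑ j, M i j = δ * ε * Real.sqrt (Fintype.card m)

namespace SimpleGraph

variable {V : Type*} [Fintype V] (G : SimpleGraph V) [DecidableRel G.Adj]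

theorem adjMatrix_mul_self_apply {R : Type*} [NonAssocSemiring R] (v w : V) :
    (G.adjMatrix R * G.adjMatrix R) v w = Fintype.card (G.commonNeighbors v w) := by
  rw [adjMatrix_mul_apply, ← Set.toFinset_card]
  simp only [adjMatrix_apply, Finset.sum_boole]
  congr 2
  ext u
  rw [Set.mem_toFinset, mem_commonNeighbors, Finset.mem_filter, mem_neighborFinset, G.adj_comm w]

/-- The entries of `A * A` are natural numbers, and `⌊·⌋₊` reads them off. -/
theorem isSRGWith_of_adjMatrix_mul_self {R : Type*} [Semiring R] [LinearOrder R]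
    [IsStrictOrderedRing R] [FloorSemiring R] [DecidableEq V] {a b : R}
    (h : G.adjMatrix R * G.adjMatrix R = a • Matrix.of (fun _ _ ↦ 1) + b • 1) :
    G.IsSRGWith (Fintype.card V) ⌊a + b⌋₊ ⌊a⌋₊ ⌊a⌋₊ := by
  have hcard (v w : V) :
      Fintype.card (G.commonNeighbors v w) = ⌊(G.adjMatrix R * G.adjMatrix R) v w⌋₊ := by
    rw [adjMatrix_mul_self_apply, Nat.floor_natCast]
  have hoff {v w : V} (hvw : v ≠ w) : Fintype.card (G.commonNeighbors v w) = ⌊a⌋₊ := by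
    rw [hcard, h]
    simp [hvw]
  refine ⟨rfl, fun v ↦ ?_, fun v w hadj ↦ hoff hadj.ne, fun v w hvw _ ↦ hoff hvw⟩
  rw [← Nat.floor_natCast (R := R) (G.degree v), ← adjMatrix_mul_self_apply_self, h]
  simp

end SimpleGraph

namespace IsRSHCD

variable {m : Type*} [Fintype m] [DecidableEq m] {M : Matrix m m ℝ} {δ ε : ℝ}

theorem mul_self (hM : IsRSHCD M δ ε) : M * M = (Fintype.card m : ℝ) • 1 := by
  obtain ⟨hsymm, -, hmul, -⟩ := hM
  simpa only [hsymm.eq] using hmul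

theorem mul_ones (hM : IsRSHCD M δ ε) :
    M * Matrix.of (fun _ _ ↦ 1) = (δ * ε * √(Fintype.card m)) • Matrix.of (fun _ _ ↦ 1) := by
  obtain ⟨-, -, -, -, -, -, hrow⟩ := hM
  ext i j
  simp [Matrix.mul_apply, hrow i]

theorem ones_mul (hM : IsRSHCD M δ ε) :
    Matrix.of (fun _ _ ↦ 1) * M = (δ * ε * √(Fintype.card m)) • Matrix.of (fun _ _ ↦ 1) := by
  obtain ⟨hsymm, -, -, -, -, -, hrow⟩ := hM
  ext i j
  simpa [Matrix.mul_apply, hsymm.apply j] using hrow j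

theorem diag_mul_diag (hM : IsRSHCD M δ ε) : δ * δ = 1 := by
  obtain ⟨-, -, -, hδ, -⟩ := hM
  rcases hδ with rfl | rfl <;> norm_num

theorem apply_eq_neg_of_ne (hM : IsRSHCD M δ ε) {i j : m} (h : M i j ≠ δ) : M i j = -δ := by
  obtain ⟨-, hentry, -, hδ, -⟩ := hM
  rcases hentry i j with hij | hij <;> rcases hδ with rfl | rfl <;> simp_all

theorem two_smul_adjMatrix (hM : IsRSHCD M δ ε) {G : SimpleGraph m} [DecidableRel G.Adj]
    (hG : ∀ i j, G.Adj i j ↔ i ≠ j ∧ M i j ≠ δ) :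
    (2 : ℝ) • G.adjMatrix ℝ = Matrix.of (fun _ _ ↦ 1) - δ • M := by
  have hdiag : ∀ i, M i i = δ := hM.2.2.2.2.1
  have hδ := hM.diag_mul_diag
  ext i j
  by_cases hij : i = j
  · subst hij
    simp [hdiag i, hδ]
  by_cases hMij : M i j = δ
  · have : ¬ G.Adj i j := fun h ↦ ((hG i j).1 h).2 hMij
    simp [this, hMij, hδ]
  · have : G.Adj i j := (hG i j).2 ⟨hij, hMij⟩
    norm_num [this, hM.apply_eq_neg_of_ne hMij, hδ]

theorem adjMatrix_mul_self (hM : IsRSHCD M δ ε) {G : SimpleGraph m} [DecidableRel G.Adj]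
    (hG : ∀ i j, G.Adj i j ↔ i ≠ j ∧ M i j ≠ δ) :
    G.adjMatrix ℝ * G.adjMatrix ℝ =
      ((Fintype.card m - 2 * ε * √(Fintype.card m)) / 4) • Matrix.of (fun _ _ ↦ 1) +
        (Fintype.card m / 4 : ℝ) • 1 := by
  set n : ℝ := (Fintype.card m : ℝ)
  set J : Matrix m m ℝ := Matrix.of fun _ _ ↦ 1
  have hA : (2 : ℝ) • G.adjMatrix ℝ = J - δ • M := hM.two_smul_adjMatrix hG
  have hJJ : J * J = n • J := by
    ext i j
    simp [J, n, Matrix.mul_apply]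
  have hMJ : M * J = (δ * ε * √n) • J := hM.mul_ones
  have hJM : J * M = (δ * ε * √n) • J := hM.ones_mul
  have hδ := hM.diag_mul_diag
  calc G.adjMatrix ℝ * G.adjMatrix ℝ
      = (1 / 4 : ℝ) • (((2 : ℝ) • G.adjMatrix ℝ) * ((2 : ℝ) • G.adjMatrix ℝ)) := by
        rw [Matrix.smul_mul, Matrix.mul_smul, smul_smul, smul_smul]
        norm_num
    _ = (1 / 4 : ℝ) • (J * J - δ • (M * J) - δ • (J * M) + (δ * δ) • (M * M)) := by
        rw [hA, sub_mul, mul_sub, mul_sub, Matrix.smul_mul, Matrix.mul_smul,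
          Matrix.smul_mul, Matrix.mul_smul, smul_smul]
        module
    _ = _ := by
        rw [hJJ, hMJ, hJM, hM.mul_self, hδ]
        linear_combination (norm := module) hδ • ((-(ε * √n) / 2) • J)

end IsRSHCD

open scoped Classical in
/-- The graph obtained from an RSHCD `M` of order `n` by joining two distinct indices `i, j`
iff `M i j ≠ δ` (replace entries equal to the diagonal value by 0 and the rest by 1) is
strongly regular for some parameters `(n, k, λ, μ)`. -/
theorem rshcd_graph_is_strongly_regular (n : ℕ) (M : Matrix (Fin n) (Fin n) ℝ)
    (δ ε : ℝ) (hM : IsRSHCD M δ ε)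
    (G : SimpleGraph (Fin n))
    (hG : ∀ i j : Fin n, G.Adj i j ↔ i ≠ j ∧ M i j ≠ δ) :
    ∃ k l μ : ℕ, G.IsSRGWith n k l μ := by
  have hsrg := G.isSRGWith_of_adjMatrix_mul_self (hM.adjMatrix_mul_self hG)
  rw [Fintype.card_fin] at hsrg
  exact ⟨_, _, _, hsrg⟩
end

section
/- Let M be an RSHCD^ε of order 2n, written in n×n blocks as M = [[M₁₁, M₁₂],[M₁₂ᵀ, M₂₂]] with M₁₁ and M₂₂ symmetric. If all row sums of M₁₁ are 0 and all row sums of M₂₂ are 0, then the matrix T(M) = [[M₁₁, −M₁₂],[−M₁₂ᵀ, M₂₂]] is an RSHCD^{−ε} of order 2n (with the same diagonal value δ). -/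
/-- If an RSHCD^ε of order `2n`, written in `n × n` blocks as
`M = [[M₁₁, M₁₂],[M₁₂ᵀ, M₂₂]]` with `M₁₁`, `M₂₂` symmetric, has all row sums of `M₁₁` and
of `M₂₂` equal to `0`, then `T(M) = [[M₁₁, −M₁₂],[−M₁₂ᵀ, M₂₂]]` is an RSHCD^{−ε} of
order `2n` with the same diagonal value `δ`. -/
theorem rshcd_sign_switch (n : ℕ)
    (M₁₁ M₁₂ M₂₂ : Matrix (Fin n) (Fin n) ℝ) (δ ε : ℝ)
    (h11 : M₁₁.IsSymm) (h22 : M₂₂.IsSymm)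
    (hM : IsRSHCD (Matrix.fromBlocks M₁₁ M₁₂ M₁₂.transpose M₂₂) δ ε)
    (hrow11 : ∀ i, ∑ j, M₁₁ i j = 0) (hrow22 : ∀ i, ∑ j, M₂₂ i j = 0) :
    IsRSHCD (Matrix.fromBlocks M₁₁ (-M₁₂) (-M₁₂.transpose) M₂₂) δ (-ε) := by
  obtain ⟨hsym, hpm, hprod, hδ, hdiag, hε, hrow⟩ := hM
  set c : ℝ := (Fintype.card (Fin n ⊕ Fin n) : ℝ) with hc
  -- block equations from hprod
  rw [Matrix.fromBlocks_transpose, Matrix.fromBlocks_multiply] at hprod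
  have h1 : (Fintype.card (Fin n ⊕ Fin n) : ℝ) • (1 : Matrix (Fin n ⊕ Fin n) (Fin n ⊕ Fin n) ℝ)
      = Matrix.fromBlocks (c • 1) 0 0 (c • 1) := by
    rw [← Matrix.fromBlocks_one, Matrix.fromBlocks_smul]
    simp [hc]
  rw [h1] at hprod
  have e11 := congrArg Matrix.toBlocks₁₁ hprod
  have e12 := congrArg Matrix.toBlocks₁₂ hprod
  have e21 := congrArg Matrix.toBlocks₂₁ hprod
  have e22 := congrArg Matrix.toBlocks₂₂ hprod
  simp only [Matrix.toBlocks_fromBlocks₁₁, Matrix.toBlocks_fromBlocks₁₂,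
    Matrix.toBlocks_fromBlocks₂₁, Matrix.toBlocks_fromBlocks₂₂] at e11 e12 e21 e22
  refine ⟨?_, ?_, ?_, hδ, ?_, ?_, ?_⟩
  · unfold Matrix.IsSymm
    rw [Matrix.fromBlocks_transpose]
    simp [h11.eq, h22.eq]
  · rintro (i | i) (j | j)
    · exact hpm (Sum.inl i) (Sum.inl j)
    · rcases hpm (Sum.inl i) (Sum.inr j) with h | h <;>
        simp only [Matrix.fromBlocks_apply₁₂] at h <;>
        simp [Matrix.fromBlocks_apply₁₂, h]
    · rcases hpm (Sum.inr i) (Sum.inl j) with h | h <;>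
        simp only [Matrix.fromBlocks_apply₂₁, Matrix.transpose_apply] at h <;>
        simp [Matrix.fromBlocks_apply₂₁, h]
    · exact hpm (Sum.inr i) (Sum.inr j)
  · simp only [Matrix.transpose_transpose, h11.eq, h22.eq] at e11 e12 e21 e22
    rw [Matrix.fromBlocks_transpose, Matrix.fromBlocks_multiply, h1]
    simp only [Matrix.transpose_neg, Matrix.transpose_transpose, Matrix.neg_mul,
      Matrix.mul_neg, neg_neg, h11.eq, h22.eq]
    have o12 : -(M₁₁ * M₁₂) + -(M₁₂ * M₂₂) = (0 : Matrix (Fin n) (Fin n) ℝ) := by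
      rw [← neg_add, e12, neg_zero]
    have o21 : -(M₁₂.transpose * M₁₁) + -(M₂₂ * M₁₂.transpose)
        = (0 : Matrix (Fin n) (Fin n) ℝ) := by
      rw [← neg_add, e21, neg_zero]
    rw [e11, e22, o12, o21]
  · rintro (i | i)
    · exact hdiag (Sum.inl i)
    · exact hdiag (Sum.inr i)
  · rcases hε with h | h <;> simp [h]
  · rintro (i | i)
    · have := hrow (Sum.inl i)
      simp only [Fintype.sum_sum_type, Matrix.fromBlocks_apply₁₁,
        Matrix.fromBlocks_apply₁₂] at this ⊢
      simp only [Matrix.neg_apply, Finset.sum_neg_distrib, hrow11 i] at this ⊢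
      linarith
    · have := hrow (Sum.inr i)
      simp only [Fintype.sum_sum_type, Matrix.fromBlocks_apply₂₁,
        Matrix.fromBlocks_apply₂₂] at this ⊢
      simp only [Matrix.neg_apply, Finset.sum_neg_distrib, hrow22 i] at this ⊢
      linarith
end

section
/- There exists a strongly regular graph with parameters (324, 152, 70, 72) that is vertex-transitive, i.e. for every pair of vertices u, v there is a graph automorphism mapping u to v. -/
/-!
The graph is the Cayley graph of `V = ℤ₂² × ℤ₃⁴` with respect to a set `D` of 152 elements with
`0 ∉ D = -D` which is a partial difference set: a nonzero `d` is a difference of two elements of `D`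
in exactly 70 ways if `d ∈ D` and in exactly 72 ways otherwise (equivalently, `D ∪ {0}` is a
`(324, 153, 72)` Menon–Hadamard difference set). Translations are automorphisms of every Cayley
graph, so the graph is vertex-transitive, and the common neighbours of `u` and `v` correspond to the
representations of `v - u` as such a difference, so it is strongly regular. That the explicit `D`
is a partial difference set is a finite computation.
-/

open Finset

def IsPartialDifferenceSet {M : Type*} [AddGroup M] [DecidableEq M] (s : Finset M) (ℓ μ : ℕ) :
    Prop :=
  ∀ d ≠ 0, #{x ∈ s | x - d ∈ s} = if d ∈ s then ℓ else μ

namespace SimpleGraph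

variable {V W : Type*} {G : SimpleGraph V} {H : SimpleGraph W}

theorem Iso.exists_iso_apply_eq (ψ : G ≃g H) (hG : ∀ u v, ∃ φ : G ≃g G, φ u = v) (u v : W) :
    ∃ φ : H ≃g H, φ u = v := by
  obtain ⟨φ, hφ⟩ := hG (ψ.symm u) (ψ.symm v)
  exact ⟨ψ.symm.trans (φ.trans ψ), by simp [hφ]⟩

theorem Iso.card_commonNeighbors_eq (ψ : G ≃g H) (v w : V) [Fintype (G.commonNeighbors v w)]
    [Fintype (H.commonNeighbors (ψ v) (ψ w))] :
    Fintype.card (H.commonNeighbors (ψ v) (ψ w)) = Fintype.card (G.commonNeighbors v w) :=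
  Fintype.card_congr (Equiv.subtypeEquiv ψ.toEquiv fun x => by
    simp [mem_commonNeighbors, ψ.map_adj_iff]).symm

theorem IsSRGWith.of_iso [Fintype V] [Fintype W] [DecidableRel G.Adj] [DecidableRel H.Adj]
    {n k ℓ μ : ℕ} (h : G.IsSRGWith n k ℓ μ) (ψ : G ≃g H) : H.IsSRGWith n k ℓ μ where
  card := (Fintype.card_congr ψ.toEquiv).symm.trans h.card
  regular w := by
    rw [← ψ.apply_symm_apply w, ψ.degree_eq]
    exact h.regular _
  of_adj v w hvw := by
    rw [← ψ.apply_symm_apply v, ← ψ.apply_symm_apply w, ψ.card_commonNeighbors_eq]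
    exact h.of_adj _ _ (ψ.symm.map_adj_iff.2 hvw)
  of_not_adj v w hne hvw := by
    rw [← ψ.apply_symm_apply v, ← ψ.apply_symm_apply w, ψ.card_commonNeighbors_eq]
    exact h.of_not_adj (ψ.symm.injective.ne hne) (mt ψ.symm.map_adj_iff.1 hvw)

section AddGroup

variable {M : Type*} [AddGroup M]

def addCayleyTranslation (s : Set M) (d : M) : addCayley s ≃g addCayley s where
  toEquiv := Equiv.addLeft d
  map_rel_iff' := addCayley_adj_add_iff_right

theorem exists_addCayley_iso_apply_eq (s : Set M) (u v : M) :
    ∃ φ : addCayley s ≃g addCayley s, φ u = v :=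
  ⟨addCayleyTranslation s (v - u), sub_add_cancel v u⟩

end AddGroup

section AddCommGroup

variable {M : Type*} [AddCommGroup M] {s : Finset M}

theorem addCayley_adj_iff_sub_mem (hneg : ∀ x ∈ s, -x ∈ s) (hzero : 0 ∉ s) {u v : M} :
    (addCayley (s : Set M)).Adj u v ↔ v - u ∈ s := by
  simp only [addCayley_adj, neg_add_eq_sub]
  refine ⟨fun ⟨_, h⟩ => h.elim id fun h => neg_sub u v ▸ hneg _ h, fun h => ⟨?_, .inl h⟩⟩
  rintro rfl
  exact hzero (sub_self u ▸ h)

variable [Fintype M] [DecidableRel (addCayley (s : Set M)).Adj]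

theorem degree_addCayley (hneg : ∀ x ∈ s, -x ∈ s) (hzero : 0 ∉ s) (u : M) :
    (addCayley (s : Set M)).degree u = #s := by
  rw [← card_neighborSet_eq_degree, ← Fintype.card_coe s]
  exact Fintype.card_congr <| Equiv.subtypeEquiv (Equiv.subRight u) fun v => by
    simp [addCayley_adj_iff_sub_mem hneg hzero]

variable [DecidableEq M]

theorem card_commonNeighbors_addCayley (hneg : ∀ x ∈ s, -x ∈ s) (hzero : 0 ∉ s) (u v : M) :
    Fintype.card ((addCayley (s : Set M)).commonNeighbors u v) = #{x ∈ s | x - (v - u) ∈ s} := by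
  rw [← Fintype.card_coe]
  exact Fintype.card_congr <| Equiv.subtypeEquiv (Equiv.subRight u) fun w => by
    simp [mem_commonNeighbors, addCayley_adj_iff_sub_mem hneg hzero]

theorem isSRGWith_addCayley {ℓ μ : ℕ} (hneg : ∀ x ∈ s, -x ∈ s) (hzero : 0 ∉ s)
    (hs : IsPartialDifferenceSet s ℓ μ) :
    (addCayley (s : Set M)).IsSRGWith (Fintype.card M) #s ℓ μ where
  card := rfl
  regular := degree_addCayley hneg hzero
  of_adj u v huv := by
    have hvu := (addCayley_adj_iff_sub_mem hneg hzero).1 huv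
    rw [card_commonNeighbors_addCayley hneg hzero, hs _ (sub_ne_zero.2 huv.ne'), if_pos hvu]
  of_not_adj u v hne huv := by
    have hvu := mt (addCayley_adj_iff_sub_mem hneg hzero).2 huv
    rw [card_commonNeighbors_addCayley hneg hzero, hs _ (sub_ne_zero.2 hne.symm), if_neg hvu]

end AddCommGroup

end SimpleGraph

namespace SRG324

abbrev V : Type := ZMod 2 × ZMod 2 × ZMod 3 × ZMod 3 × ZMod 3 × ZMod 3

def index (v : V) : ℕ :=
  ((((v.1.val * 2 + v.2.1.val) * 3 + v.2.2.1.val) * 3 + v.2.2.2.1.val) * 3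
      + v.2.2.2.2.1.val) * 3 + v.2.2.2.2.2.val

def mask : ℕ :=
  27893162425601426216577360653750930905529471688973068542774207101865791067713362931871997116966126

def D : Finset V := {v | mask.testBit (index v)}

theorem card_V : Fintype.card V = 324 := by simp

theorem card_D : #D = 152 := by decide +kernel

theorem zero_notMem_D : 0 ∉ D := by decide +kernel

theorem neg_mem_D : ∀ v ∈ D, -v ∈ D := by
  simp only [D, mem_filter, mem_univ, true_and]
  decide +kernel

theorem isPartialDifferenceSet_D : IsPartialDifferenceSet D 70 72 := by
  simp only [IsPartialDifferenceSet, D, filter_filter, mem_filter, mem_univ, true_and]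
  decide +kernel

end SRG324

open SimpleGraph SRG324

open scoped Classical in
/-- There exists a strongly regular graph with parameters `(324, 152, 70, 72)` that is
vertex-transitive: for every pair of vertices `u, v` there is a graph automorphism
mapping `u` to `v`. -/
theorem exists_vertex_transitive_srg_324_152_70_72 :
    ∃ G : SimpleGraph (Fin 324),
      G.IsSRGWith 324 152 70 72 ∧ ∀ u v : Fin 324, ∃ φ : G ≃g G, φ u = v := by
  let ψ := Iso.map (Fintype.equivFinOfCardEq card_V) (addCayley (D : Set V))
  have hΓ := isSRGWith_addCayley neg_mem_D zero_notMem_D isPartialDifferenceSet_D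
  rw [card_V, card_D] at hΓ
  refine ⟨_, ?_, ψ.exists_iso_apply_eq (exists_addCayley_iso_apply_eq _)⟩
  convert hΓ.of_iso ψ
end
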